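/- arXiv:math/0010308 — 6 statements merged into one kernel-verified Lean document; each statement's English description precedes it below -/
import Mathlib

section
/- The operator T for the q_{ij}-CCR satisfies the braid relation T₁T₂T₁ = T₂T₁T₂ on the triple tensor power, where T₁ = T ⊗ 1 and T₂ = 1 ⊗ T. -/
/-- `ampl1 d T` is the amplification `T ⊗ 1` of an operator `T` on
`ℂ^d ⊗ ℂ^d` (modelled as `EuclideanSpace ℂ (Fin d × Fin d)`) to the triple
tensor power, acting on the first two tensor factors. -/
noncomputable def ampl1 (d : ℕ)
    (T : EuclideanSpace ℂ (Fin d × Fin d) →L[ℂ] EuclideanSpace ℂ (Fin d × Fin d)) :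
    EuclideanSpace ℂ (Fin d × Fin d × Fin d) →L[ℂ] EuclideanSpace ℂ (Fin d × Fin d × Fin d) :=
  LinearMap.toContinuousLinearMap
    { toFun := fun x => WithLp.toLp 2 (fun p =>
        T (WithLp.toLp 2 (fun r => x (r.1, r.2, p.2.2) : Fin d × Fin d → ℂ)) (p.1, p.2.1)
        : Fin d × Fin d × Fin d → ℂ)
      map_add' := by
        intro x y; ext p
        have : (WithLp.toLp 2 (fun r => (x + y) (r.1, r.2, p.2.2) : Fin d × Fin d → ℂ) :
            EuclideanSpace ℂ (Fin d × Fin d)) =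
            (WithLp.toLp 2 (fun r => x (r.1, r.2, p.2.2) : Fin d × Fin d → ℂ) :
            EuclideanSpace ℂ (Fin d × Fin d)) +
            WithLp.toLp 2 (fun r => y (r.1, r.2, p.2.2) : Fin d × Fin d → ℂ) := rfl
        show T _ _ = _
        rw [this, map_add]; rfl
      map_smul' := by
        intro c x; ext p
        have : (WithLp.toLp 2 (fun r => (c • x) (r.1, r.2, p.2.2) : Fin d × Fin d → ℂ) :
            EuclideanSpace ℂ (Fin d × Fin d)) =
            c • (WithLp.toLp 2 (fun r => x (r.1, r.2, p.2.2) : Fin d × Fin d → ℂ) :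
            EuclideanSpace ℂ (Fin d × Fin d)) := rfl
        show T _ _ = _
        rw [this, map_smul]; rfl }

/-- `ampl2 d T` is the amplification `1 ⊗ T`, acting on the last two tensor
factors of the triple tensor power. -/
noncomputable def ampl2 (d : ℕ)
    (T : EuclideanSpace ℂ (Fin d × Fin d) →L[ℂ] EuclideanSpace ℂ (Fin d × Fin d)) :
    EuclideanSpace ℂ (Fin d × Fin d × Fin d) →L[ℂ] EuclideanSpace ℂ (Fin d × Fin d × Fin d) :=
  LinearMap.toContinuousLinearMap
    { toFun := fun x => WithLp.toLp 2 (fun p =>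
        T (WithLp.toLp 2 (fun r => x (p.1, r.1, r.2) : Fin d × Fin d → ℂ)) (p.2.1, p.2.2)
        : Fin d × Fin d × Fin d → ℂ)
      map_add' := by
        intro x y; ext p
        have : (WithLp.toLp 2 (fun r => (x + y) (p.1, r.1, r.2) : Fin d × Fin d → ℂ) :
            EuclideanSpace ℂ (Fin d × Fin d)) =
            (WithLp.toLp 2 (fun r => x (p.1, r.1, r.2) : Fin d × Fin d → ℂ) :
            EuclideanSpace ℂ (Fin d × Fin d)) +
            WithLp.toLp 2 (fun r => y (p.1, r.1, r.2) : Fin d × Fin d → ℂ) := rfl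
        show T _ _ = _
        rw [this, map_add]; rfl
      map_smul' := by
        intro c x; ext p
        have : (WithLp.toLp 2 (fun r => (c • x) (p.1, r.1, r.2) : Fin d × Fin d → ℂ) :
            EuclideanSpace ℂ (Fin d × Fin d)) =
            c • (WithLp.toLp 2 (fun r => x (p.1, r.1, r.2) : Fin d × Fin d → ℂ) :
            EuclideanSpace ℂ (Fin d × Fin d)) := rfl
        show T _ _ = _
        rw [this, map_smul]; rfl }

theorem EuclideanSpace.apply_eq_of_map_single_eq_smul_single {𝕜 ι κ : Type*} [RCLike 𝕜]
    [Fintype ι] [DecidableEq ι] [DecidableEq κ]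
    (T : EuclideanSpace 𝕜 ι →ₗ[𝕜] EuclideanSpace 𝕜 κ) (σ : ι ≃ κ) (c : ι → 𝕜)
    (hT : ∀ i, T (EuclideanSpace.single i 1) = c i • EuclideanSpace.single (σ i) 1)
    (x : EuclideanSpace 𝕜 ι) (j : κ) : T x j = c (σ.symm j) * x (σ.symm j) := by
  conv_lhs => rw [← (EuclideanSpace.basisFun ι 𝕜).sum_repr x]
  simp only [EuclideanSpace.basisFun_repr, EuclideanSpace.basisFun_apply, map_sum, map_smul, hT,
    smul_smul, WithLp.ofLp_sum, Finset.sum_apply, PiLp.smul_apply, PiLp.single_apply,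
    smul_eq_mul, mul_ite, mul_one, mul_zero, ← σ.symm_apply_eq, Finset.sum_ite_eq,
    Finset.mem_univ, if_true]
  ring

section Amplification

variable {d : ℕ} {T : EuclideanSpace ℂ (Fin d × Fin d) →L[ℂ] EuclideanSpace ℂ (Fin d × Fin d)}
  {q : Fin d → Fin d → ℂ}

theorem apply_of_map_single_eq_smul_single_swap
    (hT : ∀ i j : Fin d, T (EuclideanSpace.single (i, j) 1) = q i j • EuclideanSpace.single (j, i) 1)
    (x : EuclideanSpace ℂ (Fin d × Fin d)) (a b : Fin d) :
    T x (a, b) = q b a * x (b, a) :=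
  EuclideanSpace.apply_eq_of_map_single_eq_smul_single (T : _ →ₗ[ℂ] _) (Equiv.prodComm _ _)
    (fun p => q p.1 p.2) (fun p => hT p.1 p.2) x (a, b)

theorem ampl1_apply_of_map_single_eq_smul_single_swap
    (hT : ∀ i j : Fin d, T (EuclideanSpace.single (i, j) 1) = q i j • EuclideanSpace.single (j, i) 1)
    (x : EuclideanSpace ℂ (Fin d × Fin d × Fin d)) (a b c : Fin d) :
    ampl1 d T x (a, b, c) = q b a * x (b, a, c) :=
  apply_of_map_single_eq_smul_single_swap hT _ a b

theorem ampl2_apply_of_map_single_eq_smul_single_swap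
    (hT : ∀ i j : Fin d, T (EuclideanSpace.single (i, j) 1) = q i j • EuclideanSpace.single (j, i) 1)
    (x : EuclideanSpace ℂ (Fin d × Fin d × Fin d)) (a b c : Fin d) :
    ampl2 d T x (a, b, c) = q c b * x (a, c, b) :=
  apply_of_map_single_eq_smul_single_swap hT _ b c

end Amplification

theorem qccr_T_braid_general (d : ℕ) (q : Fin d → Fin d → ℂ)
    (T : EuclideanSpace ℂ (Fin d × Fin d) →L[ℂ] EuclideanSpace ℂ (Fin d × Fin d))
    (hT : ∀ i j : Fin d,
      T (EuclideanSpace.single (i, j) (1 : ℂ)) =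
        q i j • EuclideanSpace.single (j, i) (1 : ℂ)) :
    ampl1 d T ∘L ampl2 d T ∘L ampl1 d T = ampl2 d T ∘L ampl1 d T ∘L ampl2 d T := by
  ext x ⟨a, b, c⟩
  -- both sides multiply the coordinate `x (c, b, a)` by `q b a * q c a * q c b`
  simp only [ContinuousLinearMap.comp_apply, ampl1_apply_of_map_single_eq_smul_single_swap hT,
    ampl2_apply_of_map_single_eq_smul_single_swap hT]
  ring

/-- The operator `T` of the `q_{ij}`-CCR, given by
`T (e_i ⊗ e_j) = q i j • (e_j ⊗ e_i)` with `q j i = conj (q i j)`, satisfies the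
braid relation `T₁ T₂ T₁ = T₂ T₁ T₂` on the triple tensor power, where
`T₁ = T ⊗ 1` and `T₂ = 1 ⊗ T`. -/
theorem qccr_T_braid (d : ℕ) (hd : 1 ≤ d) (q : Fin d → Fin d → ℂ)
    (hq : ∀ i j : Fin d, q j i = starRingEnd ℂ (q i j))
    (T : EuclideanSpace ℂ (Fin d × Fin d) →L[ℂ] EuclideanSpace ℂ (Fin d × Fin d))
    (hT : ∀ i j : Fin d,
      T (EuclideanSpace.single (i, j) (1 : ℂ)) =
        q i j • EuclideanSpace.single (j, i) (1 : ℂ)) :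
    ampl1 d T ∘L ampl2 d T ∘L ampl1 d T = ampl2 d T ∘L ampl1 d T ∘L ampl2 d T :=
  qccr_T_braid_general d q T hT
end

section
/- For the TCCR operator T with 0 < μ < 1, one has −1 ≤ T ≤ 1 and the kernel of 1 + T equals the span of the vectors e_j ⊗ e_i − μ e_i ⊗ e_j for i < j. -/
/-!
On the span `K` of the vectors `e_j ⊗ e_i - μ e_i ⊗ e_j` (`i < j`) the operator `T` acts as `-1`,
and `T - μ²` maps every basis vector into `K`; hence `(1 + T)(T - μ²) = 0`. The matrix of `T` in
the standard basis is real symmetric, so `T` is self-adjoint, and a self-adjoint `A` with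
`(A - a)(A - b) = 0`, `a < b`, satisfies `a ≤ A ≤ b`: both `A - a` and `b - A` are positive
multiples of their own squares. This gives `1 + T ≥ 0` and `1 - T = (1 - μ²) + (μ² - T) ≥ 0`.
Finally `(1 + μ²) x = -(T - μ²) x ∈ K` for `x ∈ ker (1 + T)`.
-/

open scoped InnerProductSpace ComplexConjugate ComplexOrder
open EuclideanSpace (single)

section
variable {𝕜 E : Type*} [RCLike 𝕜] [NormedAddCommGroup E] [InnerProductSpace 𝕜 E]
  [CompleteSpace E]

theorem IsSelfAdjoint.isPositive_of_mul_self_eq_smul {A : E →L[𝕜] E} (hA : IsSelfAdjoint A)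
    {c : ℝ} (hc : 0 < c) (h : A * A = (c : 𝕜) • A) : A.IsPositive := by
  refine ContinuousLinearMap.isPositive_def'.mpr ⟨hA, fun x => ?_⟩
  have hsq : ⟪(A * A) x, x⟫_𝕜 = c * ⟪A x, x⟫_𝕜 := by
    rw [h, smul_apply, inner_smul_left, RCLike.conj_ofReal]
  rw [mul_apply_eq_comp, hA.isSymmetric.apply_clm, inner_self_eq_norm_sq_to_K] at hsq
  have key : c * A.reApplyInnerSelf x = ‖A x‖ ^ 2 := by
    rw [ContinuousLinearMap.reApplyInnerSelf_apply, ← RCLike.re_ofReal_mul, ← hsq]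
    norm_cast
  exact nonneg_of_mul_nonneg_right (key ▸ sq_nonneg _) hc

theorem IsSelfAdjoint.isPositive_of_mul_sub_smul_one_eq_zero {A : E →L[𝕜] E}
    (hA : IsSelfAdjoint A) {a b : ℝ} (hab : a < b)
    (h : (A - (a : 𝕜) • 1) * (A - (b : 𝕜) • 1) = 0) :
    (A - (a : 𝕜) • 1).IsPositive ∧ ((b : 𝕜) • 1 - A).IsPositive := by
  have hsa : ∀ r : ℝ, IsSelfAdjoint ((r : 𝕜) • (1 : E →L[𝕜] E)) := fun r => by
    rw [← Algebra.algebraMap_eq_smul_one]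
    exact IsSelfAdjoint.algebraMap _ (RCLike.conj_ofReal r)
  constructor
  · refine (hA.sub (hsa a)).isPositive_of_mul_self_eq_smul (sub_pos.mpr hab) ?_
    calc (A - (a : 𝕜) • 1) * (A - (a : 𝕜) • 1)
        = (A - (a : 𝕜) • 1) * (((b - a : ℝ) : 𝕜) • 1 + (A - (b : 𝕜) • 1)) := by
          congr 1; push_cast; module
      _ = ((b - a : ℝ) : 𝕜) • (A - (a : 𝕜) • 1) := by
          rw [mul_add, h, add_zero, mul_smul_comm, mul_one]
  · refine ((hsa b).sub hA).isPositive_of_mul_self_eq_smul (sub_pos.mpr hab) ?_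
    calc ((b : 𝕜) • 1 - A) * ((b : 𝕜) • 1 - A)
        = (((b - a : ℝ) : 𝕜) • 1 - (A - (a : 𝕜) • 1)) * ((b : 𝕜) • 1 - A) := by
          congr 1; push_cast; module
      _ = ((b - a : ℝ) : 𝕜) • ((b : 𝕜) • 1 - A) := by
          rw [sub_mul, smul_mul_assoc, one_mul, ← neg_sub A, mul_neg, h, neg_zero, sub_zero]

end

section
variable {𝕜 ι : Type*} [RCLike 𝕜] [Fintype ι] [DecidableEq ι]

theorem LinearMap.isSymmetric_iff_conj_apply_single
    (T : EuclideanSpace 𝕜 ι →ₗ[𝕜] EuclideanSpace 𝕜 ι) :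
    T.IsSymmetric ↔ ∀ p q : ι,
      conj (T (EuclideanSpace.single p (1 : 𝕜)) q) = T (EuclideanSpace.single q (1 : 𝕜)) p := by
  rw [← LinearMap.isHermitian_toMatrix_iff (EuclideanSpace.basisFun ι 𝕜),
    Matrix.IsHermitian.ext_iff]
  simp [LinearMap.toMatrix_apply]

end

variable {ι : Type*} [LinearOrder ι]

/-- The TCCR operator, with `e_i ⊗ e_j` encoded as `single (i, j) 1` on `ℂ^(ι × ι)`. -/
structure IsTCCROperator (μ : ℝ)
    (T : EuclideanSpace ℂ (ι × ι) →L[ℂ] EuclideanSpace ℂ (ι × ι)) : Prop where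
  apply_single_diag (i : ι) : T (single (i, i) 1) = (μ : ℂ) ^ 2 • single (i, i) 1
  apply_single_of_lt {i j : ι} (h : i < j) : T (single (i, j) 1) = (μ : ℂ) • single (j, i) 1
  apply_single_of_gt {i j : ι} (h : j < i) :
    T (single (i, j) 1) = (-(1 - (μ : ℂ) ^ 2)) • single (i, j) 1 + (μ : ℂ) • single (j, i) 1

variable (ι) in
def antisymmetricSpan (μ : ℝ) : Submodule ℂ (EuclideanSpace ℂ (ι × ι)) :=
  Submodule.span ℂ {v | ∃ i j : ι, i < j ∧ v = single (j, i) 1 - (μ : ℂ) • single (i, j) 1}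

theorem sub_smul_single_mem_antisymmetricSpan (μ : ℝ) {i j : ι} (h : i < j) :
    single (j, i) 1 - (μ : ℂ) • single (i, j) 1 ∈ antisymmetricSpan ι μ :=
  Submodule.subset_span ⟨i, j, h, rfl⟩

namespace IsTCCROperator

variable {μ : ℝ} {T : EuclideanSpace ℂ (ι × ι) →L[ℂ] EuclideanSpace ℂ (ι × ι)}

theorem apply_single_apply (hT : IsTCCROperator μ T) (p : ι × ι) :
    ∃ c : ℝ, ∀ q, T (single p 1) q = if q = p then (c : ℂ) else if q = p.swap then μ else 0 := by
  obtain ⟨i, j⟩ := p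
  rcases lt_trichotomy i j with h | rfl | h
  · refine ⟨0, fun q => ?_⟩
    rw [hT.apply_single_of_lt h]
    by_cases hq : q = (i, j) <;> simp [hq, h.ne]
  · refine ⟨μ ^ 2, fun q => ?_⟩
    rw [hT.apply_single_diag]
    by_cases hq : q = (i, i) <;> simp [hq]
  · refine ⟨-(1 - μ ^ 2), fun q => ?_⟩
    rw [hT.apply_single_of_gt h]
    by_cases hq : q = (i, j) <;> simp [hq, h.ne]

variable [Fintype ι]

theorem antisymmetricSpan_le_ker (hT : IsTCCROperator μ T) :
    antisymmetricSpan ι μ ≤ LinearMap.ker (1 + T).toLinearMap := by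
  rw [antisymmetricSpan, Submodule.span_le]
  rintro _ ⟨i, j, hij, rfl⟩
  rw [SetLike.mem_coe, LinearMap.mem_ker, ContinuousLinearMap.coe_coe, add_apply,
    one_apply_eq_self, map_sub, map_smul, hT.apply_single_of_gt hij, hT.apply_single_of_lt hij]
  module

theorem isSelfAdjoint (hT : IsTCCROperator μ T) : IsSelfAdjoint T := by
  rw [ContinuousLinearMap.isSelfAdjoint_iff_isSymmetric,
    LinearMap.isSymmetric_iff_conj_apply_single]
  intro p q
  change conj (T (single p 1) q) = T (single q 1) p
  obtain ⟨c, hc⟩ := hT.apply_single_apply p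
  by_cases hqp : q = p
  · subst hqp
    simp [hc]
  obtain ⟨c', hc'⟩ := hT.apply_single_apply q
  rw [hc q, hc' p, if_neg hqp, if_neg (Ne.symm hqp)]
  by_cases hs : q = p.swap
  · rw [if_pos hs, if_pos (by rw [hs, Prod.swap_swap]), Complex.conj_ofReal]
  · rw [if_neg hs, if_neg (fun h => hs (by rw [h, Prod.swap_swap])), map_zero]

theorem sub_smul_one_apply_mem (hT : IsTCCROperator μ T) (x : EuclideanSpace ℂ (ι × ι)) :
    (T - (μ : ℂ) ^ 2 • 1) x ∈ antisymmetricSpan ι μ := by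
  suffices LinearMap.range (T - (μ : ℂ) ^ 2 • 1).toLinearMap ≤ antisymmetricSpan ι μ from
    this (LinearMap.mem_range_self _ x)
  rw [LinearMap.range_eq_map, ← (EuclideanSpace.basisFun _ ℂ).toBasis.span_eq,
    Submodule.map_span_le]
  rintro _ ⟨⟨i, j⟩, rfl⟩
  simp only [OrthonormalBasis.coe_toBasis, EuclideanSpace.basisFun_apply,
    ContinuousLinearMap.coe_coe, sub_apply, smul_apply, one_apply_eq_self]
  rcases lt_trichotomy i j with h | rfl | h
  · rw [hT.apply_single_of_lt h, show (μ : ℂ) • single (j, i) (1 : ℂ) - (μ : ℂ) ^ 2 •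
        single (i, j) 1 = (μ : ℂ) • (single (j, i) 1 - (μ : ℂ) • single (i, j) 1) by module]
    exact Submodule.smul_mem _ _ (sub_smul_single_mem_antisymmetricSpan μ h)
  · rw [hT.apply_single_diag, sub_self]
    exact Submodule.zero_mem _
  · rw [hT.apply_single_of_gt h, show _ - (μ : ℂ) ^ 2 • single (i, j) (1 : ℂ) =
        -(single (i, j) 1 - (μ : ℂ) • single (j, i) 1) by module]
    exact Submodule.neg_mem _ (sub_smul_single_mem_antisymmetricSpan μ h)

theorem one_add_mul_sub_smul_one_eq_zero (hT : IsTCCROperator μ T) :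
    (1 + T) * (T - (μ : ℂ) ^ 2 • 1) = 0 := by
  ext1 x
  exact hT.antisymmetricSpan_le_ker (hT.sub_smul_one_apply_mem x)

theorem ker_one_add (hT : IsTCCROperator μ T) :
    LinearMap.ker (1 + T).toLinearMap = antisymmetricSpan ι μ := by
  refine le_antisymm (fun x hx => ?_) hT.antisymmetricSpan_le_ker
  have hx : x + T x = 0 := hx
  have hne : (1 + (μ : ℂ) ^ 2) ≠ 0 := by norm_cast; positivity
  have hsmul : (1 + (μ : ℂ) ^ 2) • x = -((T - (μ : ℂ) ^ 2 • 1) x) := by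
    rw [sub_apply, smul_apply, one_apply_eq_self]
    linear_combination (norm := module) hx
  exact (Submodule.smul_mem_iff _ hne).mp (hsmul ▸ neg_mem (hT.sub_smul_one_apply_mem x))

end IsTCCROperator

theorem tccr_T_bounds_and_ker_general (d : ℕ) (μ : ℝ) (hμ0 : 0 < μ) (hμ1 : μ < 1)
    (T : EuclideanSpace ℂ (Fin d × Fin d) →L[ℂ] EuclideanSpace ℂ (Fin d × Fin d))
    (hTd : ∀ i : Fin d,
      T (EuclideanSpace.single (i, i) (1 : ℂ)) =
        ((μ : ℂ) ^ 2) • EuclideanSpace.single (i, i) (1 : ℂ))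
    (hTlt : ∀ i j : Fin d, i < j →
      T (EuclideanSpace.single (i, j) (1 : ℂ)) =
        (μ : ℂ) • EuclideanSpace.single (j, i) (1 : ℂ))
    (hTgt : ∀ i j : Fin d, j < i →
      T (EuclideanSpace.single (i, j) (1 : ℂ)) =
        (-(1 - (μ : ℂ) ^ 2)) • EuclideanSpace.single (i, j) (1 : ℂ) +
          (μ : ℂ) • EuclideanSpace.single (j, i) (1 : ℂ)) :
    (1 + T).IsPositive ∧ (1 - T).IsPositive ∧
      LinearMap.ker (1 + T).toLinearMap =
        Submodule.span ℂ
          {v : EuclideanSpace ℂ (Fin d × Fin d) | ∃ i j : Fin d, i < j ∧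
            v = EuclideanSpace.single (j, i) (1 : ℂ) -
              (μ : ℂ) • EuclideanSpace.single (i, j) (1 : ℂ)} := by
  have hT : IsTCCROperator μ T := ⟨hTd, hTlt _ _, hTgt _ _⟩
  obtain ⟨hpos_add, hpos_sub⟩ :=
    hT.isSelfAdjoint.isPositive_of_mul_sub_smul_one_eq_zero (a := -1) (b := μ ^ 2)
      (neg_one_lt_zero.trans_le (sq_nonneg μ))
      (by simpa [add_comm] using hT.one_add_mul_sub_smul_one_eq_zero)
  have hμ2 : (0 : ℂ) ≤ ((1 - μ ^ 2 : ℝ) : ℂ) := by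
    norm_cast
    nlinarith
  refine ⟨by simpa [add_comm] using hpos_add, ?_, hT.ker_one_add⟩
  convert (ContinuousLinearMap.isPositive_one.smul_of_nonneg hμ2).add hpos_sub using 1
  simp only [RCLike.ofReal_eq_complex_ofReal]
  push_cast
  module

/-- For the TCCR operator `T` with `0 < μ < 1`, one has
`-1 ≤ T ≤ 1` (i.e. `1 + T ≥ 0` and `1 - T ≥ 0`) and the kernel of `1 + T`
equals the span of the vectors `e_j ⊗ e_i - μ e_i ⊗ e_j` for `i < j`. -/
theorem tccr_T_bounds_and_ker (d : ℕ) (hd : 1 ≤ d) (μ : ℝ) (hμ0 : 0 < μ) (hμ1 : μ < 1)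
    (T : EuclideanSpace ℂ (Fin d × Fin d) →L[ℂ] EuclideanSpace ℂ (Fin d × Fin d))
    (hTd : ∀ i : Fin d,
      T (EuclideanSpace.single (i, i) (1 : ℂ)) =
        ((μ : ℂ) ^ 2) • EuclideanSpace.single (i, i) (1 : ℂ))
    (hTlt : ∀ i j : Fin d, i < j →
      T (EuclideanSpace.single (i, j) (1 : ℂ)) =
        (μ : ℂ) • EuclideanSpace.single (j, i) (1 : ℂ))
    (hTgt : ∀ i j : Fin d, j < i →
      T (EuclideanSpace.single (i, j) (1 : ℂ)) =
        (-(1 - (μ : ℂ) ^ 2)) • EuclideanSpace.single (i, j) (1 : ℂ) +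
          (μ : ℂ) • EuclideanSpace.single (j, i) (1 : ℂ)) :
    (1 + T).IsPositive ∧ (1 - T).IsPositive ∧
      LinearMap.ker (1 + T).toLinearMap =
        Submodule.span ℂ
          {v : EuclideanSpace ℂ (Fin d × Fin d) | ∃ i j : Fin d, i < j ∧
            v = EuclideanSpace.single (j, i) (1 : ℂ) -
              (μ : ℂ) • EuclideanSpace.single (i, j) (1 : ℂ)} :=
  tccr_T_bounds_and_ker_general d μ hμ0 hμ1 T hTd hTlt hTgt
end

section
/- If T ≥ 0 is a positive self-adjoint operator on H ⊗ H, then P₂ = 1 + T is strictly positive and P₃ = (1 + T₂)(1 + T₁ + T₁T₂) is strictly positive on H^{⊗3}. -/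
open ContinuousLinearMap ComplexOrder

theorem ContinuousLinearMap.isPositive_iff_forall_inner_nonneg {E : Type*} [NormedAddCommGroup E]
    [InnerProductSpace ℂ E] (T : E →L[ℂ] E) : T.IsPositive ↔ ∀ x, 0 ≤ inner ℂ (T x) x := by
  simp only [isPositive_iff_complex, Complex.nonneg_iff, Complex.ext_iff, Complex.ofReal_re,
    Complex.ofReal_im, RCLike.re_to_complex, true_and, eq_comm (a := (0 : ℝ)), and_comm]

theorem ContinuousLinearMap.isPositive_of_inner_self_eq_sum {ι E F : Type*} [Fintype ι]
    [NormedAddCommGroup E] [InnerProductSpace ℂ E] [NormedAddCommGroup F] [InnerProductSpace ℂ F]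
    {A : E →L[ℂ] E} {T : F →L[ℂ] F} (hT : T.IsPositive) (s : ι → E → F)
    (h : ∀ x, inner ℂ (A x) x = ∑ i, inner ℂ (T (s i x)) (s i x)) : A.IsPositive := by
  rw [isPositive_iff_forall_inner_nonneg] at hT ⊢
  exact fun x => h x ▸ Finset.sum_nonneg fun i _ => hT (s i x)

section Amplification

variable {d : ℕ}

noncomputable def slice12 (x : EuclideanSpace ℂ (Fin d × Fin d × Fin d)) (c : Fin d) :
    EuclideanSpace ℂ (Fin d × Fin d) := WithLp.toLp 2 fun r => x (r.1, r.2, c)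

noncomputable def slice23 (x : EuclideanSpace ℂ (Fin d × Fin d × Fin d)) (a : Fin d) :
    EuclideanSpace ℂ (Fin d × Fin d) := WithLp.toLp 2 fun r => x (a, r.1, r.2)

variable (T : EuclideanSpace ℂ (Fin d × Fin d) →L[ℂ] EuclideanSpace ℂ (Fin d × Fin d))

theorem inner_ampl1_self (x : EuclideanSpace ℂ (Fin d × Fin d × Fin d)) :
    inner ℂ (ampl1 d T x) x = ∑ c, inner ℂ (T (slice12 x c)) (slice12 x c) := by
  simp only [PiLp.inner_apply]
  rw [← (Equiv.prodAssoc (Fin d) (Fin d) (Fin d)).sum_comp, Fintype.sum_prod_type, Finset.sum_comm]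
  rfl

theorem inner_ampl2_self (x : EuclideanSpace ℂ (Fin d × Fin d × Fin d)) :
    inner ℂ (ampl2 d T x) x = ∑ a, inner ℂ (T (slice23 x a)) (slice23 x a) := by
  simp only [PiLp.inner_apply, Fintype.sum_prod_type]
  rfl

variable {T}

theorem isPositive_ampl1 (hT : T.IsPositive) : (ampl1 d T).IsPositive :=
  isPositive_of_inner_self_eq_sum hT _ (inner_ampl1_self T)

theorem isPositive_ampl2 (hT : T.IsPositive) : (ampl2 d T).IsPositive :=
  isPositive_of_inner_self_eq_sum hT _ (inner_ampl2_self T)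

end Amplification

theorem isStrictlyPositive_one_add {E : Type*} [NormedAddCommGroup E] [InnerProductSpace ℂ E]
    [CompleteSpace E] {T : E →L[ℂ] E} (hT : T.IsPositive) : IsStrictlyPositive (1 + T) :=
  isStrictlyPositive_one.add_nonneg ((nonneg_iff_isPositive T).mpr hT)

theorem P2_P3_strictly_positive_of_positive_general (d : ℕ)
    (T : EuclideanSpace ℂ (Fin d × Fin d) →L[ℂ] EuclideanSpace ℂ (Fin d × Fin d))
    (hpos : T.IsPositive) :
    ((1 + T).IsPositive ∧ IsUnit (1 + T)) ∧
      ((1 + ampl2 d T) ∘L (1 + ampl1 d T + ampl1 d T ∘L ampl2 d T)).IsPositive ∧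
        IsUnit ((1 + ampl2 d T) ∘L (1 + ampl1 d T + ampl1 d T ∘L ampl2 d T)) := by
  set S := 1 + ampl2 d T
  have hS : IsStrictlyPositive S := isStrictlyPositive_one_add (isPositive_ampl2 hpos)
  have hP₃ : S ∘L (1 + ampl1 d T + ampl1 d T ∘L ampl2 d T) = S + star S * ampl1 d T * S := by
    rw [hS.isSelfAdjoint.star_eq]
    simp only [S, mul_def, comp_add, add_comp, comp_assoc, one_def, comp_id, id_comp]
    abel
  have hP₃pos : IsStrictlyPositive (S ∘L (1 + ampl1 d T + ampl1 d T ∘L ampl2 d T)) :=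
    hP₃ ▸ hS.add_nonneg (star_left_conjugate_nonneg
      ((nonneg_iff_isPositive _).mpr (isPositive_ampl1 hpos)) S)
  have hP₂ := isStrictlyPositive_one_add hpos
  exact ⟨⟨(nonneg_iff_isPositive _).mp hP₂.nonneg, hP₂.isUnit⟩,
    (nonneg_iff_isPositive _).mp hP₃pos.nonneg, hP₃pos.isUnit⟩

/-- If `T ≥ 0` is a positive (self-adjoint) operator on `H ⊗ H`
(here `H = ℂ^d`), then `P₂ = 1 + T` is strictly positive and
`P₃ = (1 + T₂)(1 + T₁ + T₁T₂)` is strictly positive on `H^{⊗3}`. -/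
theorem P2_P3_strictly_positive_of_positive (d : ℕ) (hd : 1 ≤ d)
    (T : EuclideanSpace ℂ (Fin d × Fin d) →L[ℂ] EuclideanSpace ℂ (Fin d × Fin d))
    (hpos : T.IsPositive) :
    ((1 + T).IsPositive ∧ IsUnit (1 + T)) ∧
      ((1 + ampl2 d T) ∘L (1 + ampl1 d T + ampl1 d T ∘L ampl2 d T)).IsPositive ∧
        IsUnit ((1 + ampl2 d T) ∘L (1 + ampl1 d T + ampl1 d T ∘L ampl2 d T)) :=
  P2_P3_strictly_positive_of_positive_general d T hpos
end

section
/- For a braided self-adjoint T with ‖T‖ ≤ 1, the kernel of P₃ = (1 + T₂)(1 + T₁ + T₁T₂) equals ker(1 + T₁) + ker(1 + T₂). -/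
open LinearMap (ker)
open scoped InnerProductSpace

section Symmetrizer

variable {R : Type*} [Ring R]

def braidSymmetrizer (a b : R) : R := (1 + b) * (1 + a + a * b)

theorem braidSymmetrizer_eq_mul_one_add (a b : R) :
    braidSymmetrizer a b = (1 + (1 + b) * a) * (1 + b) := by
  unfold braidSymmetrizer
  noncomm_ring

variable {a b : R}

theorem braidSymmetrizer_eq_sum (h : a * b * a = b * a * b) :
    braidSymmetrizer a b = 1 + a + b + a * b + b * a + a * b * a := by
  rw [h]
  unfold braidSymmetrizer
  noncomm_ring

theorem braidSymmetrizer_comm (h : a * b * a = b * a * b) :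
    braidSymmetrizer a b = braidSymmetrizer b a := by
  rw [braidSymmetrizer_eq_sum h, braidSymmetrizer_eq_sum h.symm, h]
  abel

theorem one_add_braidSymmetrizer (h : a * b * a = b * a * b) :
    1 + braidSymmetrizer a b = (1 + a + a * b) + (1 + b + b * a) + a * b * a := by
  rw [braidSymmetrizer_eq_sum h]
  abel

end Symmetrizer

section Contraction

variable {𝕜 E : Type*} [RCLike 𝕜] [NormedAddCommGroup E] [InnerProductSpace 𝕜 E]

variable {S : E →L[𝕜] E}

theorem ContinuousLinearMap.norm_apply_le_of_opNorm_le_one (hS : ‖S‖ ≤ 1) (x : E) :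
    ‖S x‖ ≤ ‖x‖ :=
  (S.le_of_opNorm_le hS x).trans_eq (one_mul _)

theorem LinearMap.IsSymmetric.apply_apply_eq_of_norm_apply_eq (hS : S.toLinearMap.IsSymmetric)
    (hS₁ : ‖S‖ ≤ 1) {v : E} (hv : ‖S v‖ = ‖v‖) : S (S v) = v := by
  have hre : RCLike.re ⟪S (S v), v⟫_𝕜 = ‖v‖ ^ 2 := by
    rw [hS.apply_clm, ← hv, ← @inner_self_eq_norm_sq 𝕜]
  have hnorm : ‖S (S v)‖ ≤ ‖v‖ := (S.norm_apply_le_of_opNorm_le_one hS₁ _).trans_eq hv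
  have : ‖S (S v) - v‖ ^ 2 ≤ 0 := by
    rw [@norm_sub_sq 𝕜, hre]
    nlinarith [norm_nonneg (S (S v))]
  exact sub_eq_zero.mp (norm_eq_zero.mp (by nlinarith [norm_nonneg (S (S v) - v)]))

theorem LinearMap.IsSymmetric.apply_eq_self_of_norm_apply_eq (hS : S.toLinearMap.IsSymmetric)
    (hS₁ : ‖S‖ ≤ 1) {v : E} (hv : ‖S v‖ = ‖v‖) (hperp : v ∈ (ker (1 + S).toLinearMap)ᗮ) : S v = v := by
  set u := v - S v
  have hSu : S u = -u := by
    simp only [u, map_sub, hS.apply_apply_eq_of_norm_apply_eq hS₁ hv, neg_sub]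
  have huv : ⟪u, v⟫_𝕜 = 0 := by
    refine Submodule.inner_right_of_mem_orthogonal ?_ hperp
    change u + S u = 0
    rw [hSu, add_neg_cancel]
  have : ⟪u, u⟫_𝕜 = 0 := by
    calc ⟪u, u⟫_𝕜 = ⟪u, v⟫_𝕜 - ⟪u, S v⟫_𝕜 := inner_sub_right u v (S v)
      _ = ⟪u, v⟫_𝕜 - ⟪S u, v⟫_𝕜 := by rw [hS.apply_clm]
      _ = 0 := by rw [hSu, inner_neg_left, huv, neg_zero, sub_zero]
  exact (sub_eq_zero.mp (inner_self_eq_zero.mp this)).symm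

end Contraction

section Kernel

variable {𝕜 E : Type*} [RCLike 𝕜] [NormedAddCommGroup E] [InnerProductSpace 𝕜 E]

theorem ker_one_add_le_ker_braidSymmetrizer_right (T₁ T₂ : E →L[𝕜] E) :
    ker (1 + T₂).toLinearMap ≤ ker (braidSymmetrizer T₁ T₂).toLinearMap :=
  fun x (hx : (1 + T₂) x = 0) => by
    change braidSymmetrizer T₁ T₂ x = 0
    rw [braidSymmetrizer_eq_mul_one_add, mul_apply_eq_comp, hx, map_zero]

variable {T₁ T₂ : E →L[𝕜] E}

theorem norm_le_norm_of_braidSymmetrizer_apply_eq_zero (hbraid : T₁ * T₂ * T₁ = T₂ * T₁ * T₂)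
    {y : E} (hy : braidSymmetrizer T₁ T₂ y = 0)
    (hperp : y ∈ (ker (1 + T₁).toLinearMap ⊔ ker (1 + T₂).toLinearMap)ᗮ) :
    ‖y‖ ≤ ‖T₁ (T₂ (T₁ y))‖ := by
  set W := ker (1 + T₁).toLinearMap ⊔ ker (1 + T₂).toLinearMap
  have hk₁ : (1 + T₁ + T₁ * T₂) y ∈ W := Submodule.mem_sup_right (by
    change (1 + T₂) ((1 + T₁ + T₁ * T₂) y) = 0
    rwa [← mul_apply_eq_comp])
  have hk₂ : (1 + T₂ + T₂ * T₁) y ∈ W := Submodule.mem_sup_left (by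
    change (1 + T₁) ((1 + T₂ + T₂ * T₁) y) = 0
    rwa [← mul_apply_eq_comp, ← braidSymmetrizer, ← braidSymmetrizer_comm hbraid])
  set k := (1 + T₁ + T₁ * T₂) y + (1 + T₂ + T₂ * T₁) y
  have hky : ⟪y, k⟫_𝕜 = 0 :=
    inner_eq_zero_symm.mp (Submodule.inner_right_of_mem_orthogonal (W.add_mem hk₁ hk₂) hperp)
  have hcube : T₁ (T₂ (T₁ y)) = y - k := by
    refine eq_sub_of_add_eq' ?_
    simpa [k, hy] using congr($(one_add_braidSymmetrizer hbraid) y).symm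
  rw [hcube, ← sq_le_sq₀ (norm_nonneg _) (norm_nonneg _), @norm_sub_sq 𝕜, hky, map_zero]
  nlinarith [norm_nonneg k]

theorem eq_zero_of_braidSymmetrizer_apply_eq_zero (hT₁ : T₁.toLinearMap.IsSymmetric)
    (hT₂ : T₂.toLinearMap.IsSymmetric) (h₁ : ‖T₁‖ ≤ 1) (h₂ : ‖T₂‖ ≤ 1)
    (hbraid : T₁ * T₂ * T₁ = T₂ * T₁ * T₂) {y : E} (hy : braidSymmetrizer T₁ T₂ y = 0)
    (hperp : y ∈ (ker (1 + T₁).toLinearMap ⊔ ker (1 + T₂).toLinearMap)ᗮ) : y = 0 := by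
  have hnorm := norm_le_norm_of_braidSymmetrizer_apply_eq_zero hbraid hy hperp
  have hcontr {S : E →L[𝕜] E} (hS : ‖S‖ ≤ 1) (x : E) := S.norm_apply_le_of_opNorm_le_one hS x
  have hT₁y : T₁ y = y := by
    refine hT₁.apply_eq_self_of_norm_apply_eq h₁ (le_antisymm (hcontr h₁ y) ?_)
      (Submodule.orthogonal_le le_sup_left hperp)
    exact hnorm.trans ((hcontr h₁ _).trans (hcontr h₂ _))
  have hT₂y : T₂ y = y := by
    refine hT₂.apply_eq_self_of_norm_apply_eq h₂ (le_antisymm (hcontr h₂ y) ?_)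
      (Submodule.orthogonal_le le_sup_right hperp)
    have : T₁ (T₂ (T₁ y)) = T₂ (T₁ (T₂ y)) := congr($hbraid y)
    exact (hnorm.trans_eq (congrArg norm this)).trans ((hcontr h₂ _).trans (hcontr h₁ _))
  have : (6 : 𝕜) • y = 0 := by
    rw [← hy]
    simp only [braidSymmetrizer, mul_apply_eq_comp, add_apply, one_apply_eq_self, hT₁y, hT₂y,
      map_add]
    module
  exact (smul_eq_zero.mp this).resolve_left (by norm_num)

theorem ker_braidSymmetrizer [FiniteDimensional 𝕜 E] (hT₁ : T₁.toLinearMap.IsSymmetric)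
    (hT₂ : T₂.toLinearMap.IsSymmetric) (h₁ : ‖T₁‖ ≤ 1) (h₂ : ‖T₂‖ ≤ 1)
    (hbraid : T₁ * T₂ * T₁ = T₂ * T₁ * T₂) :
    ker (braidSymmetrizer T₁ T₂).toLinearMap =
      ker (1 + T₁).toLinearMap ⊔ ker (1 + T₂).toLinearMap := by
  have hle : ker (1 + T₁).toLinearMap ⊔ ker (1 + T₂).toLinearMap ≤
      ker (braidSymmetrizer T₁ T₂).toLinearMap :=
    sup_le (braidSymmetrizer_comm hbraid ▸ ker_one_add_le_ker_braidSymmetrizer_right T₂ T₁)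
      (ker_one_add_le_ker_braidSymmetrizer_right T₁ T₂)
  have hbot : _ ⊓ ker (braidSymmetrizer T₁ T₂).toLinearMap = ⊥ :=
    eq_bot_iff.mpr fun y ⟨hperp, hy⟩ =>
      eq_zero_of_braidSymmetrizer_apply_eq_zero hT₁ hT₂ h₁ h₂ hbraid hy hperp
  rw [← Submodule.sup_orthogonal_inf_of_hasOrthogonalProjection hle, hbot, sup_bot_eq]

end Kernel

section Slices

variable {𝕜 E F ι : Type*} [RCLike 𝕜] [NormedAddCommGroup E] [InnerProductSpace 𝕜 E]
  [NormedAddCommGroup F] [InnerProductSpace 𝕜 F] [Fintype ι] {s : ι → E → F}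
  {A : E →L[𝕜] E} {T : F →L[𝕜] F}

theorem LinearMap.IsSymmetric.of_inner_eq_sum_slices
    (hs : ∀ x y, ⟪x, y⟫_𝕜 = ∑ i, ⟪s i x, s i y⟫_𝕜) (hA : ∀ i x, s i (A x) = T (s i x))
    (hT : T.toLinearMap.IsSymmetric) : A.toLinearMap.IsSymmetric := fun x y => by
  simp only [ContinuousLinearMap.coe_coe, hs, hA, hT.apply_clm]

theorem ContinuousLinearMap.opNorm_le_of_inner_eq_sum_slices
    (hs : ∀ x y, ⟪x, y⟫_𝕜 = ∑ i, ⟪s i x, s i y⟫_𝕜) (hA : ∀ i x, s i (A x) = T (s i x)) :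
    ‖A‖ ≤ ‖T‖ := by
  have hnorm (x : E) : ‖x‖ ^ 2 = ∑ i, ‖s i x‖ ^ 2 := by
    simp only [← @inner_self_eq_norm_sq 𝕜, hs x x, map_sum]
  refine A.opNorm_le_bound (norm_nonneg T) fun x => ?_
  rw [← sq_le_sq₀ (norm_nonneg _) (by positivity), mul_pow, hnorm, hnorm, Finset.mul_sum]
  refine Finset.sum_le_sum fun i _ => ?_
  rw [hA, ← mul_pow]
  exact pow_le_pow_left₀ (norm_nonneg _) (T.le_opNorm _) 2

end Slices

namespace EuclideanSpace

variable {𝕜 ι κ α : Type*} [RCLike 𝕜] [Fintype ι] [Fintype κ] [Fintype α]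

def slice (e : ι × κ ≃ α) (x : EuclideanSpace 𝕜 α) (i : ι) : EuclideanSpace 𝕜 κ :=
  WithLp.toLp 2 fun r => x (e (i, r))

theorem inner_eq_sum_inner_slice (e : ι × κ ≃ α) (x y : EuclideanSpace 𝕜 α) :
    ⟪x, y⟫_𝕜 = ∑ i, ⟪slice e x i, slice e y i⟫_𝕜 := by
  simp only [PiLp.inner_apply, slice]
  rw [← e.sum_comp, Fintype.sum_prod_type]

end EuclideanSpace

section Amplification

open EuclideanSpace

variable {d : ℕ} {T : EuclideanSpace ℂ (Fin d × Fin d) →L[ℂ] EuclideanSpace ℂ (Fin d × Fin d)}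

theorem isSymmetric_ampl1 (hT : T.toLinearMap.IsSymmetric) :
    (ampl1 d T).toLinearMap.IsSymmetric :=
  .of_inner_eq_sum_slices
    (inner_eq_sum_inner_slice ((Equiv.prodComm _ _).trans (Equiv.prodAssoc _ _ _)))
    (fun _ _ => rfl) hT

theorem isSymmetric_ampl2 (hT : T.toLinearMap.IsSymmetric) :
    (ampl2 d T).toLinearMap.IsSymmetric :=
  .of_inner_eq_sum_slices (inner_eq_sum_inner_slice (Equiv.refl _)) (fun _ _ => rfl) hT

theorem norm_ampl1_le : ‖ampl1 d T‖ ≤ ‖T‖ :=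
  ContinuousLinearMap.opNorm_le_of_inner_eq_sum_slices
    (inner_eq_sum_inner_slice ((Equiv.prodComm _ _).trans (Equiv.prodAssoc _ _ _)))
    (fun _ _ => rfl)

theorem norm_ampl2_le : ‖ampl2 d T‖ ≤ ‖T‖ :=
  ContinuousLinearMap.opNorm_le_of_inner_eq_sum_slices (inner_eq_sum_inner_slice (Equiv.refl _))
    (fun _ _ => rfl)

end Amplification

theorem ker_P3_of_braided_general (d : ℕ)
    (T : EuclideanSpace ℂ (Fin d × Fin d) →L[ℂ] EuclideanSpace ℂ (Fin d × Fin d))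
    (hsa : IsSelfAdjoint T) (hn : ‖T‖ ≤ 1)
    (hbraid : ampl1 d T ∘L ampl2 d T ∘L ampl1 d T = ampl2 d T ∘L ampl1 d T ∘L ampl2 d T) :
    LinearMap.ker ((1 + ampl2 d T) ∘L (1 + ampl1 d T + ampl1 d T ∘L ampl2 d T)).toLinearMap =
      LinearMap.ker (1 + ampl1 d T).toLinearMap ⊔ LinearMap.ker (1 + ampl2 d T).toLinearMap :=
  ker_braidSymmetrizer (isSymmetric_ampl1 hsa.isSymmetric) (isSymmetric_ampl2 hsa.isSymmetric)
    (norm_ampl1_le.trans hn) (norm_ampl2_le.trans hn) hbraid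

/-- For a braided self-adjoint `T` with `‖T‖ ≤ 1`, the kernel of
`P₃ = (1 + T₂)(1 + T₁ + T₁T₂)` equals `ker (1 + T₁) + ker (1 + T₂)`. -/
theorem ker_P3_of_braided (d : ℕ) (hd : 1 ≤ d)
    (T : EuclideanSpace ℂ (Fin d × Fin d) →L[ℂ] EuclideanSpace ℂ (Fin d × Fin d))
    (hsa : IsSelfAdjoint T) (hn : ‖T‖ ≤ 1)
    (hbraid : ampl1 d T ∘L ampl2 d T ∘L ampl1 d T = ampl2 d T ∘L ampl1 d T ∘L ampl2 d T) :
    LinearMap.ker ((1 + ampl2 d T) ∘L (1 + ampl1 d T + ampl1 d T ∘L ampl2 d T)).toLinearMap =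
      LinearMap.ker (1 + ampl1 d T).toLinearMap ⊔ LinearMap.ker (1 + ampl2 d T).toLinearMap :=
  ker_P3_of_braided_general d T hsa hn hbraid
end

section
/- If s₁, …, s_d are operators on a Hilbert space satisfying the TCCR-limit relations s_i* s_j = δ_{ij}(1 − ∑_{k<i} s_k s_k*), then each s_i is a partial isometry and the operators s_i s_i* are pairwise commuting projections. -/
open ContinuousLinearMap

private lemma eq_zero_of_adjoint_comp_self_eq_zero
    {H : Type*} [NormedAddCommGroup H] [InnerProductSpace ℂ H] [CompleteSpace H]
    (a : H →L[ℂ] H) (h : ContinuousLinearMap.adjoint a * a = 0) : a = 0 := by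
  have h2 := ContinuousLinearMap.norm_adjoint_comp_self a
  rw [← ContinuousLinearMap.mul_def, h, norm_zero] at h2
  have : ‖a‖ = 0 := by nlinarith [norm_nonneg a]
  exact norm_eq_zero.mp this

/-- If `s₁, …, s_d` satisfy the TCCR-limit relations
`sᵢ* sⱼ = δᵢⱼ (1 - ∑_{k < i} s_k s_k*)`, then each `sᵢ` is a partial isometry
(`sᵢ sᵢ* sᵢ = sᵢ`) and the operators `sᵢ sᵢ*` are pairwise commuting
(self-adjoint idempotent) projections. -/
theorem tccr_limit_partial_isometries (d : ℕ)
    (H : Type*) [NormedAddCommGroup H] [InnerProductSpace ℂ H] [CompleteSpace H]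
    (s : Fin d → H →L[ℂ] H)
    (hs : ∀ i j, ContinuousLinearMap.adjoint (s i) ∘L s j =
      if i = j then 1 - ∑ k ∈ Finset.Iio i, s k ∘L ContinuousLinearMap.adjoint (s k)
      else 0) :
    (∀ i, (s i ∘L ContinuousLinearMap.adjoint (s i)) ∘L s i = s i) ∧
      (∀ i, IsSelfAdjoint (s i ∘L ContinuousLinearMap.adjoint (s i)) ∧
        IsIdempotentElem (s i ∘L ContinuousLinearMap.adjoint (s i))) ∧
      (∀ i j, (s i ∘L ContinuousLinearMap.adjoint (s i)) ∘L
          (s j ∘L ContinuousLinearMap.adjoint (s j)) =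
        (s j ∘L ContinuousLinearMap.adjoint (s j)) ∘L
          (s i ∘L ContinuousLinearMap.adjoint (s i))) := by
  set a : Fin d → (H →L[ℂ] H) := fun i => ContinuousLinearMap.adjoint (s i) with ha
  set p : Fin d → (H →L[ℂ] H) := fun i => s i * a i with hp
  have hs' : ∀ i j, a i * s j =
      if i = j then 1 - ∑ k ∈ Finset.Iio i, p k else 0 := by
    intro i j
    simpa [ContinuousLinearMap.mul_def, ha, hp] using hs i j
  -- orthogonality of the p's
  have horth : ∀ i j, i ≠ j → p i * p j = 0 := by
    intro i j hij
    have h := hs' i j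
    rw [if_neg hij] at h
    calc p i * p j = s i * (a i * s j) * a j := by simp only [hp]; noncomm_ring
      _ = 0 := by rw [h]; simp
  -- partial isometry by strong induction
  have hpi : ∀ i, p i * s i = s i := by
    suffices h : ∀ n : ℕ, ∀ i : Fin d, (i : ℕ) < n → p i * s i = s i by
      intro i; exact h (i + 1) i (Nat.lt_succ_self _)
    intro n
    induction n with
    | zero => intro i h; omega
    | succ n IHn =>
      intro i hi
      have IH : ∀ k : Fin d, k < i → p k * s k = s k := fun k hk =>
        IHn k (by omega)
      set e : H →L[ℂ] H := a i * s i with he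
      have heval : e = 1 - ∑ k ∈ Finset.Iio i, p k := by
        rw [he, hs' i i, if_pos rfl]
      have hP2 : (∑ k ∈ Finset.Iio i, p k) * (∑ k ∈ Finset.Iio i, p k)
          = ∑ k ∈ Finset.Iio i, p k := by
        rw [Finset.sum_mul]
        refine Finset.sum_congr rfl ?_
        intro k hk
        rw [Finset.mul_sum, Finset.sum_eq_single k]
        · have hk' : k < i := Finset.mem_Iio.mp hk
          calc p k * p k = (p k * s k) * a k := by simp only [hp]; noncomm_ring
            _ = p k := by rw [IH k hk']
        · intro l _ hlk
          exact horth k l (Ne.symm hlk)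
        · intro h; exact absurd hk h
      have he2 : e * e = e := by
        rw [heval, sub_mul, mul_sub, mul_sub, hP2]
        noncomm_ring
      have hesa : ContinuousLinearMap.adjoint e = e := by
        simp only [he, ha]
        rw [show ContinuousLinearMap.adjoint (s i) * s i =
          ContinuousLinearMap.adjoint (s i) ∘L s i from rfl,
          ContinuousLinearMap.adjoint_comp, ContinuousLinearMap.adjoint_adjoint]
      have ha' : s i * (1 - e) = 0 := by
        apply eq_zero_of_adjoint_comp_self_eq_zero
        have hadj : ContinuousLinearMap.adjoint (s i * (1 - e)) =
            ContinuousLinearMap.adjoint (1 - e) * ContinuousLinearMap.adjoint (s i) := by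
          rw [show s i * (1 - e) = s i ∘L (1 - e) from rfl,
            ContinuousLinearMap.adjoint_comp]
          rfl
        have h1e : ContinuousLinearMap.adjoint (1 - e) = 1 - e := by
          rw [map_sub, hesa]
          congr 1
          calc ContinuousLinearMap.adjoint (1 : H →L[ℂ] H)
              = ContinuousLinearMap.adjoint (ContinuousLinearMap.id ℂ H) := rfl
            _ = 1 := ContinuousLinearMap.adjoint_id
        rw [hadj, h1e]
        calc (1 - e) * ContinuousLinearMap.adjoint (s i) * (s i * (1 - e))
            = (1 - e) * (a i * s i) * (1 - e) := by simp only [ha]; noncomm_ring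
          _ = (1 - e) * e * (1 - e) := by rw [← he]
          _ = 0 := by rw [sub_mul, one_mul, he2, sub_self, zero_mul]
      have hse : s i * e = s i := by
        rw [mul_sub, mul_one, sub_eq_zero] at ha'
        exact ha'.symm
      calc p i * s i = s i * e := by simp only [hp, he]; noncomm_ring
        _ = s i := hse
  have hsa : ∀ i, IsSelfAdjoint (p i) := by
    intro i
    apply ContinuousLinearMap.isSelfAdjoint_iff'.mpr
    simp only [hp, ha]
    rw [show s i * ContinuousLinearMap.adjoint (s i) =
      s i ∘L ContinuousLinearMap.adjoint (s i) from rfl,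
      ContinuousLinearMap.adjoint_comp, ContinuousLinearMap.adjoint_adjoint]
  refine ⟨?_, ?_, ?_⟩
  · intro i
    show p i * s i = s i
    exact hpi i
  · intro i
    refine ⟨hsa i, ?_⟩
    show p i * p i = p i
    calc p i * p i = (p i * s i) * a i := by simp only [hp]; noncomm_ring
      _ = p i := by rw [hpi i]
  · intro i j
    show p i * p j = p j * p i
    by_cases h : i = j
    · subst h; rfl
    · rw [horth i j h, horth j i (Ne.symm h)]
end

section
/- For the q_{ij}-CCR operator T with all |q_{ij}| < 1, the operator 1 + T is strictly positive, i.e., ker(1 + T) = 0. -/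
/-!
`T` permutes the coordinates of `ℂ^d ⊗ ℂ^d` by the flip `(i, j) ↦ (j, i)` and scales them by the
`q i j`. The condition `q j i = conj (q i j)` makes it symmetric, and `‖q i j‖ < 1` makes it a strict
contraction: `‖T x‖ < ‖x‖` for `x ≠ 0`. Hence `re ⟪(1 + T) x, x⟫ ≥ ‖x‖ (‖x‖ - ‖T x‖) ≥ 0`, and
`(1 + T) x = 0` would give `T x = -x`, which has the same norm as `x`.
-/

open scoped InnerProductSpace ComplexConjugate

namespace ContinuousLinearMap

theorem ker_one_add_eq_bot_of_norm_apply_lt {R E : Type*} [Semiring R] [NormedAddCommGroup E]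
    [Module R E] (T : E →L[R] E) (hT : ∀ x, x ≠ 0 → ‖T x‖ < ‖x‖) :
    LinearMap.ker (1 + T).toLinearMap = ⊥ := by
  refine LinearMap.ker_eq_bot'.mpr fun x hx => by_contra fun hx0 => ?_
  have hTx : T x = -x := eq_neg_of_add_eq_zero_right hx
  simpa [hTx] using hT x hx0

theorem isPositive_one_add_of_norm_apply_le {𝕜 E : Type*} [RCLike 𝕜] [NormedAddCommGroup E]
    [InnerProductSpace 𝕜 E] {T : E →L[𝕜] E} (hT : T.IsSymmetric) (hle : ∀ x, ‖T x‖ ≤ ‖x‖) :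
    (1 + T).IsPositive := by
  refine ⟨by simpa using LinearMap.IsSymmetric.one.add hT, fun x => ?_⟩
  have hcs : -RCLike.re ⟪T x, x⟫_𝕜 ≤ ‖T x‖ * ‖x‖ := by
    simpa [inner_neg_left] using re_inner_le_norm (-T x) x
  have hx : RCLike.re ⟪x, x⟫_𝕜 = ‖x‖ ^ 2 := by simp
  calc (0 : ℝ) ≤ ‖x‖ * (‖x‖ - ‖T x‖) := mul_nonneg (norm_nonneg x) (sub_nonneg.mpr (hle x))
    _ ≤ RCLike.re ⟪x, x⟫_𝕜 + RCLike.re ⟪T x, x⟫_𝕜 := by nlinarith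
    _ = (1 + T).reApplyInnerSelf x := by simp [reApplyInnerSelf, inner_add_left]

end ContinuousLinearMap

namespace EuclideanSpace

variable {𝕜 ι : Type*} [RCLike 𝕜] [Fintype ι] [DecidableEq ι] {σ : ι → ι} {w : ι → 𝕜}
  {T : EuclideanSpace 𝕜 ι →L[𝕜] EuclideanSpace 𝕜 ι}

theorem apply_eq_of_map_single (hσ : Function.Involutive σ)
    (hT : ∀ i, T (single i 1) = w i • single (σ i) 1) (x : EuclideanSpace 𝕜 ι) (j : ι) :
    T x j = w (σ j) * x (σ j) := by
  conv_lhs => rw [← (basisFun ι 𝕜).sum_repr x]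
  simp_rw [map_sum, map_smul, basisFun_apply, hT, basisFun_repr, WithLp.ofLp_sum,
    Finset.sum_apply, PiLp.smul_apply, PiLp.single_apply, @eq_comm _ j, hσ.eq_iff]
  simp [mul_comm]

theorem isSymmetric_of_map_single (hσ : Function.Involutive σ) (hw : ∀ i, w (σ i) = conj (w i))
    (hT : ∀ i, T (single i 1) = w i • single (σ i) 1) : T.IsSymmetric := by
  intro x y
  simp only [ContinuousLinearMap.coe_coe, PiLp.inner_apply, RCLike.inner_apply,
    apply_eq_of_map_single hσ hT]
  rw [← Equiv.sum_comp hσ.toPerm]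
  refine Finset.sum_congr rfl fun i _ => ?_
  simp only [Function.Involutive.coe_toPerm, hσ i, hw, map_mul]
  ring

theorem norm_apply_lt_of_map_single (hσ : Function.Involutive σ) (hw : ∀ i, ‖w i‖ < 1)
    (hT : ∀ i, T (single i 1) = w i • single (σ i) 1) {x : EuclideanSpace 𝕜 ι} (hx : x ≠ 0) :
    ‖T x‖ < ‖x‖ := by
  obtain ⟨i, hi⟩ : ∃ i, x i ≠ 0 := by
    by_contra! h
    exact hx (PiLp.ext h)
  rw [← sq_lt_sq₀ (norm_nonneg _) (norm_nonneg _), norm_sq_eq, norm_sq_eq,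
    ← Equiv.sum_comp hσ.toPerm]
  simp only [apply_eq_of_map_single hσ hT, Function.Involutive.coe_toPerm, hσ _, norm_mul, mul_pow]
  refine Finset.sum_lt_sum (fun j _ => ?_) ⟨i, Finset.mem_univ _, ?_⟩
  · exact mul_le_of_le_one_left (by positivity) (pow_le_one₀ (norm_nonneg _) (hw j).le)
  · exact mul_lt_of_lt_one_left (by positivity) (pow_lt_one₀ (norm_nonneg _) (hw i) two_ne_zero)

end EuclideanSpace

theorem qccr_one_add_T_strictly_positive_general (d : ℕ)
    (q : Fin d → Fin d → ℂ)
    (hq : ∀ i j : Fin d, q j i = starRingEnd ℂ (q i j))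
    (hb : ∀ i j : Fin d, ‖q i j‖ < 1)
    (T : EuclideanSpace ℂ (Fin d × Fin d) →L[ℂ] EuclideanSpace ℂ (Fin d × Fin d))
    (hT : ∀ i j : Fin d,
      T (EuclideanSpace.single (i, j) (1 : ℂ)) =
        q i j • EuclideanSpace.single (j, i) (1 : ℂ)) :
    (1 + T).IsPositive ∧ LinearMap.ker (1 + T).toLinearMap = ⊥ := by
  have hswap : Function.Involutive (Prod.swap : Fin d × Fin d → Fin d × Fin d) := Prod.swap_swap
  have hT' : ∀ p : Fin d × Fin d,
      T (EuclideanSpace.single p 1) = q p.1 p.2 • EuclideanSpace.single p.swap 1 :=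
    fun p => hT p.1 p.2
  have hcontr : ∀ x, x ≠ 0 → ‖T x‖ < ‖x‖ := fun _ =>
    EuclideanSpace.norm_apply_lt_of_map_single hswap (fun p => hb p.1 p.2) hT'
  have hsymm : T.IsSymmetric :=
    EuclideanSpace.isSymmetric_of_map_single hswap (fun p => hq p.1 p.2) hT'
  refine ⟨ContinuousLinearMap.isPositive_one_add_of_norm_apply_le hsymm fun x => ?_,
    ContinuousLinearMap.ker_one_add_eq_bot_of_norm_apply_lt T hcontr⟩
  rcases eq_or_ne x 0 with rfl | hx
  · simp
  · exact (hcontr x hx).le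

/-- For the `q_{ij}`-CCR operator `T` with all `|q i j| < 1`,
the operator `1 + T` is strictly positive, i.e. `ker (1 + T) = 0`. -/
theorem qccr_one_add_T_strictly_positive (d : ℕ) (hd : 1 ≤ d)
    (q : Fin d → Fin d → ℂ)
    (hq : ∀ i j : Fin d, q j i = starRingEnd ℂ (q i j))
    (hb : ∀ i j : Fin d, ‖q i j‖ < 1)
    (T : EuclideanSpace ℂ (Fin d × Fin d) →L[ℂ] EuclideanSpace ℂ (Fin d × Fin d))
    (hT : ∀ i j : Fin d,
      T (EuclideanSpace.single (i, j) (1 : ℂ)) =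
        q i j • EuclideanSpace.single (j, i) (1 : ℂ)) :
    (1 + T).IsPositive ∧ LinearMap.ker (1 + T).toLinearMap = ⊥ :=
  qccr_one_add_T_strictly_positive_general d q hq hb T hT
end
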